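/- arXiv:1308.4469 — 3 statements merged into one kernel-verified Lean document; each statement's English description precedes it below -/
import Mathlib

section
/- In a preorder numbering of a forest, if V_j is a set of vertices with consecutive preorder labels, and A_j is the set of vertices not in V_j that lie on a path from some vertex of V_j to the roots (i.e., proper ancestors of vertices in V_j outside V_j), then A_j contains no two vertices at the same depth; hence |A_j| is at most the height of the forest. -/
/-! Two distinct ancestors `a`, `b` of vertices `w`, `v` of the interval `[l, u]` have different
preorder numbers, say `p a < p b`. If they had the same depth, the whole subtree of `a` (in
particular `w`) would precede `b`, so `l ≤ p w < p b < p v ≤ u` and `b` would lie in the interval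
itself. Hence depth is injective on the outside ancestors, which therefore number at most the
height. -/

section PreorderForest

variable {V : Type*} (p : V → ℕ) (anc : V → V → Prop) (depth : V → ℕ)

theorem mem_Icc_of_anc_of_same_depth_anc (hanc_lt : ∀ a b, anc a b → p a < p b)
    (hsame : ∀ q r, depth q = depth r → p q < p r → ∀ x, anc q x → p x < p r)
    {l u : ℕ} {a b v w : V} (hd : depth a = depth b) (hab : p a < p b)
    (haw : anc a w) (hw : l ≤ p w) (hbv : anc b v) (hv : p v ≤ u) :
    l ≤ p b ∧ p b ≤ u :=
  ⟨hw.trans (hsame a b hd hab w haw).le, (hanc_lt b v hbv).le.trans hv⟩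

theorem depth_injOn_anc_outside_Icc (hp : Function.Injective p)
    (hanc_lt : ∀ a b, anc a b → p a < p b)
    (hsame : ∀ q r, depth q = depth r → p q < p r → ∀ x, anc q x → p x < p r) (l u : ℕ) :
    Set.InjOn depth {a | a ∉ p ⁻¹' Set.Icc l u ∧ ∃ v ∈ p ⁻¹' Set.Icc l u, anc a v} := by
  intro a ha b hb hd
  by_contra hne
  wlog hab : p a < p b generalizing a b
  · exact this hb ha hd.symm (Ne.symm hne) ((hp.ne hne).lt_or_gt.resolve_left hab)
  obtain ⟨-, w, hw, haw⟩ := ha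
  obtain ⟨hb, v, hv, hbv⟩ := hb
  exact hb (mem_Icc_of_anc_of_same_depth_anc p anc depth hanc_lt hsame hd hab haw hw.1 hbv hv.2)

end PreorderForest

theorem ncard_le_of_injOn_of_lt {α : Type*} {s : Set α} {f : α → ℕ} {H : ℕ}
    (hf : Set.InjOn f s) (hlt : ∀ a ∈ s, f a < H) : s.ncard ≤ H := by
  simpa using Set.ncard_le_ncard_of_injOn f hlt hf (Set.finite_Iio H)

theorem stmt1_general {V : Type*}
    (p : V → ℕ) (hp : Function.Injective p)
    (anc : V → V → Prop) (depth : V → ℕ) (H : ℕ)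
    (hanc_lt : ∀ a b, anc a b → p a < p b)
    (hsame : ∀ q r, depth q = depth r → p q < p r → ∀ x, anc q x → p x < p r)
    (hH : ∀ v, depth v < H)
    (l u : ℕ)
    (Vj : Set V) (hVj : Vj = {v | l ≤ p v ∧ p v ≤ u})
    (Aj : Set V) (hAj : Aj = {a | a ∉ Vj ∧ ∃ v ∈ Vj, anc a v}) :
    (∀ a ∈ Aj, ∀ b ∈ Aj, depth a = depth b → a = b) ∧ Aj.ncard ≤ H := by
  subst hVj hAj
  have hinj := depth_injOn_anc_outside_Icc p anc depth hp hanc_lt hsame l u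
  exact ⟨hinj, ncard_le_of_injOn_of_lt hinj fun a _ => hH a⟩

/-- In a preorder numbering `p` of a forest (with proper-ancestor relation `anc`
and `depth` function), if `Vj` is a set of vertices with consecutive preorder
labels and `Aj` is the set of proper ancestors of vertices of `Vj` lying outside
`Vj`, then `Aj` contains no two distinct vertices at the same depth; hence
`|Aj|` is at most the height `H` of the forest. -/
theorem stmt1 {V : Type*} [Fintype V]
    (p : V → ℕ) (hp : Function.Injective p)
    (anc : V → V → Prop) (depth : V → ℕ) (H : ℕ)
    (hanc_lt : ∀ a b, anc a b → p a < p b)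
    (hdepth : ∀ a b, anc a b → depth a < depth b)
    (hinterval : ∀ a v w, anc a v → p a < p w → p w ≤ p v → anc a w)
    (hsame : ∀ q r, depth q = depth r → p q < p r → ∀ x, anc q x → p x < p r)
    (hH : ∀ v, depth v < H)
    (l u : ℕ)
    (Vj : Set V) (hVj : Vj = {v | l ≤ p v ∧ p v ≤ u})
    (Aj : Set V) (hAj : Aj = {a | a ∉ Vj ∧ ∃ v ∈ Vj, anc a v}) :
    (∀ a ∈ Aj, ∀ b ∈ Aj, depth a = depth b → a = b) ∧ Aj.ncard ≤ H :=
  stmt1_general p hp anc depth H hanc_lt hsame hH l u Vj hVj Aj hAj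
end

section
/- In any triangle with circumradius R and inradius r satisfying R/r = ρ ≥ 2, every interior angle is at least α, where cos α = (1 + √(ρ(ρ−2)))/ρ. Moreover α ≤ π/3, with equality in the bound exactly for the equilateral triangle (ρ = 2). -/
/-!
Let `x = ∠BAC` and `a, b, c` the sides opposite `A, B, C`. The centre of a disk of radius `r`
inside the triangle is at distance at least `r` from each side, so splitting the triangle at it
gives `r (a + b + c) ≤ 2 · area = b c sin x`. By the law of cosines `b + c ≤ a / sin (x/2)`, and by
the law of sines `a = 2 R sin x`; together these turn the area bound into
`r ≤ 2 R σ (1 - σ)` with `σ = sin (x/2)`. Thus `2ρσ² - 2ρσ + 1 ≤ 0`, which forces `ρ ≥ 2` (Euler)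
and puts `σ` above the smaller root `(ρ - √(ρ(ρ-2))) / (2ρ)`; this is exactly
`cos x = 1 - 2σ² ≤ (1 + √(ρ(ρ-2))) / ρ`.
-/

open EuclideanGeometry Real

open Module Metric InnerProductGeometry

theorem inradius_le_two_mul_sin_half_mul_one_sub {x a b c r R : ℝ} (hx₀ : 0 < x) (hxπ : x < π)
    (ha : 0 ≤ a) (hb : 0 < b) (hc : 0 < c)
    (hcos : a ^ 2 = b ^ 2 + c ^ 2 - 2 * b * c * cos x) (hsin : a = 2 * R * sin x)
    (harea : r * (a + b + c) ≤ b * c * sin x) :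
    r ≤ 2 * R * sin (x / 2) * (1 - sin (x / 2)) := by
  set σ := sin (x / 2)
  set κ := cos (x / 2)
  have hσ : 0 < σ := sin_pos_of_pos_of_lt_pi (by linarith) (by linarith)
  have hκ : 0 < κ := cos_pos_of_mem_Ioo ⟨by linarith, by linarith⟩
  have hsinx : sin x = 2 * σ * κ := by rw [← sin_two_mul, mul_div_cancel₀ x two_ne_zero]
  have hcosx : cos x = 1 - 2 * σ ^ 2 := by
    rw [← cos_two_mul_eq_one_sub, mul_div_cancel₀ x two_ne_zero]
  have hpyth : σ ^ 2 + κ ^ 2 = 1 := sin_sq_add_cos_sq _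
  -- `a² = (b + c)² - 4bcκ² ≥ (b + c)² (1 - κ²)`
  have hbc : (b + c) * σ ≤ a := by
    refine (pow_le_pow_iff_left₀ (by positivity) ha two_ne_zero).1 ?_
    nlinarith [sq_nonneg (b - c)]
  have hsides : (b + c - a) * (a + b + c) = 4 * κ ^ 2 * (b * c) := by
    rw [hcosx] at hcos
    linear_combination -hcos - 4 * b * c * hpyth
  have hr : (a + b + c) * (2 * κ * r) ≤ (a + b + c) * (σ * (b + c - a)) := by
    have := mul_le_mul_of_nonneg_left harea (by positivity : 0 ≤ 2 * κ)
    rw [hsinx] at this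
    linear_combination this - σ * hsides
  refine le_of_mul_le_mul_left ?_ (by positivity : 0 < 2 * κ)
  calc 2 * κ * r ≤ σ * (b + c - a) := le_of_mul_le_mul_left hr (by positivity)
    _ ≤ a * (1 - σ) := by linarith
    _ = 2 * κ * (2 * R * σ * (1 - σ)) := by rw [hsin, hsinx]; ring

theorem two_le_of_one_le_two_mul_mul_one_sub {ρ σ : ℝ} (hρ : 0 ≤ ρ)
    (h : 1 ≤ 2 * ρ * σ * (1 - σ)) : 2 ≤ ρ := by
  nlinarith [sq_nonneg (2 * σ - 1)]

theorem one_sub_two_mul_sq_le_of_one_le_two_mul_mul_one_sub {ρ σ : ℝ} (hρ : 0 ≤ ρ)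
    (h : 1 ≤ 2 * ρ * σ * (1 - σ)) : 1 - 2 * σ ^ 2 ≤ (1 + √(ρ * (ρ - 2))) / ρ := by
  have hρ₂ := two_le_of_one_le_two_mul_mul_one_sub hρ h
  set s := √(ρ * (ρ - 2))
  have hs₀ : 0 ≤ s := sqrt_nonneg _
  have hs : s ^ 2 = ρ * (ρ - 2) := sq_sqrt (by nlinarith)
  have hsρ : s ≤ ρ := by nlinarith
  -- `σ` lies above the smaller root `(ρ - s) / (2ρ)` of `2ρσ² - 2ρσ + 1`
  have hσ : ρ - s ≤ 2 * ρ * σ := by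
    nlinarith [(abs_le_of_sq_le_sq' (by nlinarith : (2 * ρ * σ - ρ) ^ 2 ≤ s ^ 2) hs₀).1]
  rw [le_div_iff₀ (by linarith)]
  nlinarith [mul_le_mul hσ hσ (by linarith) (by nlinarith)]

noncomputable def aspectRatioAngle (ρ : ℝ) : ℝ := arccos ((1 + √(ρ * (ρ - 2))) / ρ)

theorem aspectRatioAngle_le_of_one_le_two_mul_sin_half_mul_one_sub {ρ x : ℝ} (hρ : 0 ≤ ρ)
    (hx₀ : 0 ≤ x) (hxπ : x ≤ π) (h : 1 ≤ 2 * ρ * sin (x / 2) * (1 - sin (x / 2))) :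
    aspectRatioAngle ρ ≤ x := by
  have hcos : cos x = 1 - 2 * sin (x / 2) ^ 2 := by
    rw [← cos_two_mul_eq_one_sub, mul_div_cancel₀ x two_ne_zero]
  calc aspectRatioAngle ρ ≤ arccos (cos x) :=
        arccos_le_arccos (hcos ▸ one_sub_two_mul_sq_le_of_one_le_two_mul_mul_one_sub hρ h)
    _ = x := arccos_cos hx₀ hxπ

theorem aspectRatioAngle_two : aspectRatioAngle 2 = π / 3 := by
  rw [aspectRatioAngle, sub_self, mul_zero, sqrt_zero, add_zero, ← cos_pi_div_three,
    arccos_cos (by positivity) (by linarith [pi_pos])]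

theorem aspectRatioAngle_lt_pi_div_three {ρ : ℝ} (hρ : 2 < ρ) : aspectRatioAngle ρ < π / 3 := by
  have hs₀ : 0 ≤ √(ρ * (ρ - 2)) := sqrt_nonneg _
  have hs : √(ρ * (ρ - 2)) ^ 2 = ρ * (ρ - 2) := sq_sqrt (by nlinarith)
  rw [← aspectRatioAngle_two, aspectRatioAngle, aspectRatioAngle, sub_self, mul_zero, sqrt_zero,
    add_zero]
  refine strictAntiOn_arccos ⟨by norm_num, by norm_num⟩ ⟨?_, ?_⟩ ?_
  · exact (neg_one_lt_zero.trans_le (by positivity)).le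
  · rw [div_le_one (by linarith)]
    nlinarith
  · rw [div_lt_div_iff₀ (by norm_num) (by linarith)]
    nlinarith

theorem aspectRatioAngle_le_pi_div_three {ρ : ℝ} (hρ : 2 ≤ ρ) : aspectRatioAngle ρ ≤ π / 3 := by
  rcases hρ.eq_or_lt with rfl | hρ
  · exact aspectRatioAngle_two.le
  · exact (aspectRatioAngle_lt_pi_div_three hρ).le

theorem aspectRatioAngle_eq_pi_div_three_iff {ρ : ℝ} (hρ : 2 ≤ ρ) :
    aspectRatioAngle ρ = π / 3 ↔ ρ = 2 := by
  refine ⟨fun h ↦ ?_, fun h ↦ h ▸ aspectRatioAngle_two⟩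
  by_contra hne
  exact (aspectRatioAngle_lt_pi_div_three (lt_of_le_of_ne hρ (Ne.symm hne))).ne h

theorem dist_add_dist_add_dist_pos_of_closedBall_subset_convexHull {V : Type*}
    [NormedAddCommGroup V] [NormedSpace ℝ V] [Nontrivial V] {A B C I : V} {r : ℝ} (hr : 0 < r)
    (hin : closedBall I r ⊆ convexHull ℝ {A, B, C}) :
    0 < dist A B + dist B C + dist C A := by
  by_contra! h
  have hAB := dist_nonneg (x := A) (y := B)
  have hBC := dist_nonneg (x := B) (y := C)
  have hCA := dist_nonneg (x := C) (y := A)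
  obtain rfl : A = B := dist_le_zero.1 (by linarith)
  obtain rfl : C = A := dist_le_zero.1 (by linarith)
  obtain ⟨p, hp⟩ := (NormedSpace.sphere_nonempty (x := I)).2 hr.le
  simp only [Set.mem_singleton_iff, Set.insert_eq_of_mem, convexHull_singleton,
    Set.subset_singleton_iff] at hin
  rw [Metric.mem_sphere, hin p (sphere_subset_closedBall hp), hin I (mem_closedBall_self hr.le),
    dist_self] at hp
  exact hr.ne hp

section AreaForm

variable {V : Type*} [NormedAddCommGroup V] [InnerProductSpace ℝ V] [Fact (finrank ℝ V = 2)]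
  (o : Orientation ℝ V (Fin 2))

local notation "ω" => o.areaForm
local notation "J" => o.rightAngleRotation

theorem Orientation.areaForm_sub_sub_eq_sum_areaForm_sub (A B C I : V) :
    ω (B - A) (C - A) = ω (B - A) (I - A) + ω (C - B) (I - B) + ω (A - C) (I - C) := by
  simp only [map_sub, LinearMap.sub_apply, o.areaForm_apply_self]
  linear_combination o.areaForm_swap B C

theorem Orientation.areaForm_sub_sub_rotate (A B C : V) :
    ω (C - B) (A - B) = ω (B - A) (C - A) := by
  simp only [map_sub, LinearMap.sub_apply, o.areaForm_apply_self]
  linear_combination o.areaForm_swap C A - o.areaForm_swap B C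

theorem Orientation.abs_areaForm_eq_norm_mul_norm_mul_sin_angle (x y : V) :
    |ω x y| = ‖x‖ * ‖y‖ * sin (angle x y) := by
  rw [mul_comm, sin_angle_mul_norm_mul_norm, real_inner_self_eq_norm_sq,
    real_inner_self_eq_norm_sq, ← o.inner_sq_add_areaForm_sq x y, ← sqrt_sq_eq_abs]
  congr 1
  ring

theorem Orientation.mul_norm_le_areaForm_of_closedBall_subset_convexHull {A B C I : V} {r : ℝ}
    (hr : 0 ≤ r) (hin : closedBall I r ⊆ convexHull ℝ {A, B, C})
    (hABC : 0 ≤ ω (B - A) (C - A)) : r * ‖B - A‖ ≤ ω (B - A) (I - A) := by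
  set u := B - A
  rcases eq_or_ne u 0 with hu | hu
  · simp [hu]
  have hhull : convexHull ℝ {A, B, C} ⊆ {x | ω u A ≤ ω u x} := by
    refine convexHull_min ?_ (convex_halfSpace_ge (ω u).isLinear _)
    simp only [Set.insert_subset_iff, Set.singleton_subset_iff, Set.mem_ofPred_eq]
    refine ⟨le_rfl, ?_, ?_⟩
    · have : ω u u = 0 := o.areaForm_apply_self u
      simp only [u, map_sub] at this ⊢
      linarith
    · simpa [u, map_sub] using hABC
  -- the point of the disk closest to the line `AB`
  have hball : I - (r / ‖u‖) • J u ∈ closedBall I r := by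
    rw [mem_closedBall, dist_eq_norm, sub_sub_cancel_left, norm_neg, norm_smul,
      LinearIsometryEquiv.norm_map, norm_div, norm_norm, Real.norm_of_nonneg hr,
      div_mul_cancel₀ _ (norm_ne_zero_iff.2 hu)]
  have h := hhull (hin hball)
  simp only [Set.mem_ofPred_eq, map_sub, map_smul, smul_eq_mul,
    o.areaForm_rightAngleRotation_right, real_inner_self_eq_norm_sq] at h
  have : r / ‖u‖ * ‖u‖ ^ 2 = r * ‖u‖ := by field_simp
  rw [map_sub]
  linarith

theorem Orientation.mul_perimeter_le_areaForm_of_closedBall_subset_convexHull {A B C I : V}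
    {r : ℝ} (hr : 0 ≤ r) (hin : closedBall I r ⊆ convexHull ℝ {A, B, C})
    (hABC : 0 ≤ ω (B - A) (C - A)) :
    r * (dist A B + dist B C + dist C A) ≤ ω (B - A) (C - A) := by
  have hBCA := o.areaForm_sub_sub_rotate A B C
  have hCAB := (o.areaForm_sub_sub_rotate B C A).trans hBCA
  have hAB := o.mul_norm_le_areaForm_of_closedBall_subset_convexHull hr hin hABC
  have hBC := o.mul_norm_le_areaForm_of_closedBall_subset_convexHull (A := B) (B := C) (C := A)
    (I := I) hr (by rwa [Set.pair_comm C A, Set.insert_comm B A]) (hBCA ▸ hABC)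
  have hCA := o.mul_norm_le_areaForm_of_closedBall_subset_convexHull (A := C) (B := A) (C := B)
    (I := I) hr (by rwa [Set.insert_comm C A, Set.pair_comm C B]) (hCAB ▸ hABC)
  rw [o.areaForm_sub_sub_eq_sum_areaForm_sub A B C I, dist_eq_norm', dist_eq_norm',
    dist_eq_norm']
  linarith

theorem Orientation.mul_perimeter_le_abs_areaForm_of_closedBall_subset_convexHull {A B C I : V}
    {r : ℝ} (hr : 0 ≤ r) (hin : closedBall I r ⊆ convexHull ℝ {A, B, C}) :
    r * (dist A B + dist B C + dist C A) ≤ |ω (B - A) (C - A)| := by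
  rcases le_total 0 (ω (B - A) (C - A)) with hABC | hABC
  · exact (o.mul_perimeter_le_areaForm_of_closedBall_subset_convexHull hr hin hABC).trans
      (le_abs_self _)
  · have h := o.mul_perimeter_le_areaForm_of_closedBall_subset_convexHull (B := C) (C := B) hr
      (by rwa [Set.pair_comm C B]) (by rw [o.areaForm_swap]; linarith)
    rw [dist_comm A C, dist_comm C B, dist_comm B A] at h
    rw [abs_of_nonpos hABC, o.areaForm_swap]
    linarith

end AreaForm

section Triangle

variable {V : Type*} [NormedAddCommGroup V] [InnerProductSpace ℝ V] [Fact (finrank ℝ V = 2)]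

attribute [local instance] FiniteDimensional.of_fact_finrank_eq_two

theorem mul_perimeter_le_dist_mul_dist_mul_sin_angle_of_closedBall_subset_convexHull
    {A B C I : V} {r : ℝ} (hr : 0 ≤ r) (hin : closedBall I r ⊆ convexHull ℝ {A, B, C}) :
    r * (dist A B + dist B C + dist C A) ≤ dist A B * dist A C * sin (∠ B A C) := by
  let o : Orientation ℝ V (Fin 2) := (finBasisOfFinrankEq ℝ V Fact.out).orientation
  have h := o.mul_perimeter_le_abs_areaForm_of_closedBall_subset_convexHull hr hin
  rwa [o.abs_areaForm_eq_norm_mul_norm_mul_sin_angle, ← dist_eq_norm', ← dist_eq_norm'] at h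

theorem EuclideanGeometry.Sphere.dist_eq_two_mul_radius_mul_sin_angle {P : Type*} [MetricSpace P]
    [NormedAddTorsor V P] {s : Sphere P} {A B C : P} (hA : A ∈ s) (hB : B ∈ s) (hC : C ∈ s)
    (hAB : A ≠ B) (hAC : A ≠ C) (hBC : B ≠ C) :
    dist B C = 2 * s.radius * sin (∠ B A C) := by
  have : Module.Oriented ℝ V (Fin 2) := ⟨(finBasisOfFinrankEq ℝ V Fact.out).orientation⟩
  have h := s.dist_div_sin_oangle_eq_two_mul_radius hB hA hC hAB.symm hBC hAC
  rw [← Real.Angle.sin_toReal, abs_sin_eq_sin_abs_of_abs_le_pi (Real.Angle.abs_toReal_le_pi _),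
    ← angle_eq_abs_oangle_toReal hAB.symm hAC.symm] at h
  rcases eq_or_ne (sin (∠ B A C)) 0 with h0 | h0
  · rw [h0, div_zero, zero_eq_mul, or_iff_right two_ne_zero] at h
    rw [EuclideanGeometry.mem_sphere, h, dist_eq_zero] at hA hB
    exact absurd (hA.trans hB.symm) hAB
  · rw [← h, div_mul_cancel₀ _ h0]

variable {A B C I : V} {r : ℝ} {s : Sphere V}

theorem one_le_two_mul_div_mul_sin_half_angle_mul_one_sub_of_closedBall_subset_convexHull
    (hr : 0 < r) (hin : closedBall I r ⊆ convexHull ℝ {A, B, C})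
    (hA : A ∈ s) (hB : B ∈ s) (hC : C ∈ s) :
    1 ≤ 2 * (s.radius / r) * sin (∠ B A C / 2) * (1 - sin (∠ B A C / 2)) := by
  have : Nontrivial V := Module.nontrivial_of_finrank_eq_succ (Fact.out : finrank ℝ V = 2)
  have harea := mul_perimeter_le_dist_mul_dist_mul_sin_angle_of_closedBall_subset_convexHull
    hr.le hin
  have hpos : 0 < dist A B * dist A C * sin (∠ B A C) :=
    (mul_pos hr (dist_add_dist_add_dist_pos_of_closedBall_subset_convexHull hr hin)).trans_le
      harea
  have hsin : 0 < sin (∠ B A C) := pos_of_mul_pos_right hpos (by positivity)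
  have hAB : 0 < dist A B := pos_of_mul_pos_left (pos_of_mul_pos_left hpos hsin.le) dist_nonneg
  have hAC : 0 < dist A C := pos_of_mul_pos_right (pos_of_mul_pos_left hpos hsin.le) dist_nonneg
  have hBC : B ≠ C := by
    rintro rfl
    rw [angle_self_of_ne (dist_pos.1 hAB).symm, sin_zero] at hsin
    exact lt_irrefl _ hsin
  have hx₀ : 0 < ∠ B A C := (angle_nonneg B A C).lt_of_ne (by rintro h; simp [← h] at hsin)
  have hxπ : ∠ B A C < π := (angle_le_pi B A C).lt_of_ne (by rintro h; simp [h] at hsin)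
  have hcos := dist_sq_eq_dist_sq_add_dist_sq_sub_two_mul_dist_mul_dist_mul_cos_angle B A C
  rw [dist_comm B A, dist_comm C A] at hcos
  have hsines := s.dist_eq_two_mul_radius_mul_sin_angle hA hB hC (dist_pos.1 hAB)
    (dist_pos.1 hAC) hBC
  rw [dist_comm C A] at harea
  have h := inradius_le_two_mul_sin_half_mul_one_sub (r := r) hx₀ hxπ dist_nonneg hAB hAC
    (by linear_combination hcos) hsines (by linarith)
  rw [mul_div_assoc', div_mul_eq_mul_div, div_mul_eq_mul_div, le_div_iff₀ hr]
  linarith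

theorem two_le_radius_div_of_closedBall_subset_convexHull (hr : 0 < r)
    (hin : closedBall I r ⊆ convexHull ℝ {A, B, C}) (hA : A ∈ s) (hB : B ∈ s) (hC : C ∈ s) :
    2 ≤ s.radius / r :=
  two_le_of_one_le_two_mul_mul_one_sub (div_nonneg (s.radius_nonneg_of_mem hA) hr.le)
    (one_le_two_mul_div_mul_sin_half_angle_mul_one_sub_of_closedBall_subset_convexHull
      hr hin hA hB hC)

theorem aspectRatioAngle_le_angle_of_closedBall_subset_convexHull (hr : 0 < r)
    (hin : closedBall I r ⊆ convexHull ℝ {A, B, C}) (hA : A ∈ s) (hB : B ∈ s) (hC : C ∈ s) :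
    aspectRatioAngle (s.radius / r) ≤ ∠ B A C :=
  aspectRatioAngle_le_of_one_le_two_mul_sin_half_mul_one_sub
    (div_nonneg (s.radius_nonneg_of_mem hA) hr.le) (angle_nonneg B A C) (angle_le_pi B A C)
    (one_le_two_mul_div_mul_sin_half_angle_mul_one_sub_of_closedBall_subset_convexHull
      hr hin hA hB hC)

end Triangle

theorem stmt5_general (A B C I O : EuclideanSpace ℝ (Fin 2)) (r R ρ : ℝ)
    (hr : 0 < r) (hρ : ρ = R / r)
    (hin : Metric.closedBall I r ⊆ convexHull ℝ {A, B, C})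
    (hcir : dist O A = R ∧ dist O B = R ∧ dist O C = R) :
    (Real.arccos ((1 + Real.sqrt (ρ * (ρ - 2))) / ρ) ≤ ∠ B A C ∧
     Real.arccos ((1 + Real.sqrt (ρ * (ρ - 2))) / ρ) ≤ ∠ A B C ∧
     Real.arccos ((1 + Real.sqrt (ρ * (ρ - 2))) / ρ) ≤ ∠ A C B) ∧
    Real.arccos ((1 + Real.sqrt (ρ * (ρ - 2))) / ρ) ≤ π / 3 ∧
    (Real.arccos ((1 + Real.sqrt (ρ * (ρ - 2))) / ρ) = π / 3 ↔ ρ = 2) := by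
  have : Fact (finrank ℝ (EuclideanSpace ℝ (Fin 2)) = 2) := ⟨finrank_euclideanSpace_fin⟩
  let s : Sphere (EuclideanSpace ℝ (Fin 2)) := ⟨O, R⟩
  have hA : A ∈ s := EuclideanGeometry.mem_sphere'.2 hcir.1
  have hB : B ∈ s := EuclideanGeometry.mem_sphere'.2 hcir.2.1
  have hC : C ∈ s := EuclideanGeometry.mem_sphere'.2 hcir.2.2
  have hinB : closedBall I r ⊆ convexHull ℝ {B, C, A} := by
    rwa [Set.pair_comm C A, Set.insert_comm B A]
  have hinC : closedBall I r ⊆ convexHull ℝ {C, A, B} := by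
    rwa [Set.insert_comm C A, Set.pair_comm C B]
  have hαA := aspectRatioAngle_le_angle_of_closedBall_subset_convexHull hr hin hA hB hC
  have hαB := aspectRatioAngle_le_angle_of_closedBall_subset_convexHull hr hinB hB hC hA
  have hαC := aspectRatioAngle_le_angle_of_closedBall_subset_convexHull hr hinC hC hA hB
  have hρ₂ := two_le_radius_div_of_closedBall_subset_convexHull hr hin hA hB hC
  rw [EuclideanGeometry.angle_comm] at hαB
  subst hρ
  exact ⟨⟨hαA, hαB, hαC⟩, aspectRatioAngle_le_pi_div_three hρ₂,
    aspectRatioAngle_eq_pi_div_three_iff hρ₂⟩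

/-- In a triangle `ABC` containing a disk of radius `r` and contained in a disk of
radius `R` (in particular when these are the incircle and circumcircle), with
`ρ = R/r ≥ 2`, every interior angle is at least `α = arccos((1 + √(ρ(ρ-2)))/ρ)`.
Moreover `α ≤ π/3`, with equality exactly when `ρ = 2` (the equilateral case). -/
theorem stmt5 (A B C I O : EuclideanSpace ℝ (Fin 2)) (r R ρ : ℝ)
    (hr : 0 < r) (hρ : ρ = R / r) (hρ2 : 2 ≤ ρ)
    (hin : Metric.closedBall I r ⊆ convexHull ℝ {A, B, C})
    (hcir : dist O A = R ∧ dist O B = R ∧ dist O C = R) :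
    (Real.arccos ((1 + Real.sqrt (ρ * (ρ - 2))) / ρ) ≤ ∠ B A C ∧
     Real.arccos ((1 + Real.sqrt (ρ * (ρ - 2))) / ρ) ≤ ∠ A B C ∧
     Real.arccos ((1 + Real.sqrt (ρ * (ρ - 2))) / ρ) ≤ ∠ A C B) ∧
    Real.arccos ((1 + Real.sqrt (ρ * (ρ - 2))) / ρ) ≤ π / 3 ∧
    (Real.arccos ((1 + Real.sqrt (ρ * (ρ - 2))) / ρ) = π / 3 ↔ ρ = 2) :=
  stmt5_general A B C I O r R ρ hr hρ hin hcir
end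

section
/- Let p be a nearest vertex of a well-shaped tetrahedral mesh to a query point q with |pq| = 1, and let τ be the first tetrahedron intersected by segment pq. Then the intersection point p' of pq with the face of τ opposite p satisfies |pp'| > 6/(ρ²+3), where ρ bounds the ratio circumradius/inradius of every tetrahedron. -/
/-!
The inscribed ball of radius `r` fits between the plane of the face `bcd` and the parallel plane
through `p`, so `2r ≤ |pp'|`. On the other side, writing `p'` as a convex combination `∑ aᵢvᵢ`
of `b, c, d`, the identity `|qp'|² = ∑ aᵢ|qvᵢ|² - ∑_{i<j} aᵢaⱼ|vᵢvⱼ|²` together with `|qvᵢ| ≥ 1`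
and `∑_{i<j} aᵢaⱼ ≤ 1/3` shows that some edge of the face has length at least `√3·√(1 - ψ²)`,
where `ψ = |qp'| = 1 - |pp'|`; edges are at most `2R`. Combining with `R < ρr` gives
`3|pp'|(2 - |pp'|) < ρ²|pp'|²`, which rearranges to the bound.
-/

open RealInnerProductSpace Set Metric Module

section InnerProductSpace

variable {E : Type*} [NormedAddCommGroup E] [InnerProductSpace ℝ E]

theorem exists_norm_eq_one_inner_eq_zero_of_two_lt_finrank [FiniteDimensional ℝ E]
    (hE : 2 < finrank ℝ E) (x y : E) : ∃ n : E, ‖n‖ = 1 ∧ ⟪n, x⟫ = 0 ∧ ⟪n, y⟫ = 0 := by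
  classical
  set K := Submodule.span ℝ {x, y}
  have hK : finrank ℝ K ≤ 2 := (finrank_span_le_card {x, y}).trans <| by
    simpa using Finset.card_insert_le x {y}
  obtain ⟨m, hmK, hm0⟩ : ∃ m ∈ Kᗮ, m ≠ 0 := by
    refine Submodule.exists_mem_ne_zero_of_ne_bot fun h => ?_
    rw [Submodule.orthogonal_eq_bot_iff] at h
    rw [h, finrank_top] at hK
    omega
  have horth : ∀ v ∈ ({x, y} : Set E), ⟪m, v⟫ = 0 := fun v hv =>
    Submodule.inner_left_of_mem_orthogonal (Submodule.subset_span hv) hmK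
  refine ⟨‖m‖⁻¹ • m, norm_smul_inv_norm hm0, ?_, ?_⟩ <;>
    simp [real_inner_smul_left, horth]

theorem two_mul_le_dist_of_closedBall_subset_slab {n I : E} {r a b : ℝ} (hn : ‖n‖ = 1)
    (hr : 0 ≤ r) (h : closedBall I r ⊆ {x | ⟪n, x⟫ ∈ uIcc a b}) : 2 * r ≤ dist a b := by
  have hmem : ∀ t : ℝ, |t| ≤ r → ⟪n, I⟫ + t ∈ uIcc a b := fun t ht => by
    have := h (show I + t • n ∈ closedBall I r by simpa [norm_smul, hn] using ht)
    simpa [inner_add_right, real_inner_smul_right, hn] using this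
  have := Real.dist_le_of_mem_uIcc (hmem r (abs_of_nonneg hr).le)
    (hmem (-r) (by rw [abs_neg, abs_of_nonneg hr]))
  rw [Real.dist_eq, abs_of_nonneg (by linarith)] at this
  linarith


theorem two_mul_le_dist_of_closedBall_subset_convexHull [FiniteDimensional ℝ E]
    (hE : 2 < finrank ℝ E) {p b c d I p' : E} {r : ℝ} (hr : 0 ≤ r)
    (hin : closedBall I r ⊆ convexHull ℝ {p, b, c, d}) (hp' : p' ∈ convexHull ℝ {b, c, d}) :
    2 * r ≤ dist p p' := by
  obtain ⟨n, hn, hnc, hnd⟩ := exists_norm_eq_one_inner_eq_zero_of_two_lt_finrank hE (c - b) (d - b)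
  have hc : ⟪n, c⟫ = ⟪n, b⟫ := by rwa [inner_sub_right, sub_eq_zero] at hnc
  have hd : ⟪n, d⟫ = ⟪n, b⟫ := by rwa [inner_sub_right, sub_eq_zero] at hnd
  have hconv : ∀ s : Set ℝ, Convex ℝ s → Convex ℝ {x : E | ⟪n, x⟫ ∈ s} := fun s hs =>
    hs.linear_preimage (innerₛₗ ℝ n)
  have hface : ⟪n, p'⟫ = ⟪n, b⟫ := by
    refine convexHull_min ?_ (hconv _ (convex_singleton ⟪n, b⟫)) hp'
    rintro x (rfl | rfl | rfl) <;> simp [hc, hd]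
  have hslab : closedBall I r ⊆ {x | ⟪n, x⟫ ∈ uIcc ⟪n, p⟫ ⟪n, b⟫} := by
    refine hin.trans (convexHull_min ?_ (hconv _ (convex_uIcc _ _)))
    rintro x (rfl | rfl | rfl | rfl) <;> simp [hc, hd]
  calc 2 * r ≤ dist ⟪n, p⟫ ⟪n, b⟫ := two_mul_le_dist_of_closedBall_subset_slab hn hr hslab
    _ = |⟪n, p - p'⟫| := by rw [inner_sub_right, hface, Real.dist_eq]
    _ ≤ ‖n‖ * ‖p - p'‖ := abs_real_inner_le_norm n _
    _ = dist p p' := by rw [hn, one_mul, dist_eq_norm]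

theorem norm_smul_add_smul_add_smul_sq {u v w : E} {a b c : ℝ} (h : a + b + c = 1) :
    ‖a • u + b • v + c • w‖ ^ 2 = a * ‖u‖ ^ 2 + b * ‖v‖ ^ 2 + c * ‖w‖ ^ 2
      - a * b * ‖u - v‖ ^ 2 - a * c * ‖u - w‖ ^ 2 - b * c * ‖v - w‖ ^ 2 := by
  simp only [← real_inner_self_eq_norm_sq, inner_add_left, inner_add_right, inner_sub_left,
    inner_sub_right, real_inner_smul_left, real_inner_smul_right, real_inner_comm u v,
    real_inner_comm u w, real_inner_comm v w]
  linear_combination (⟪u, u⟫ * a + ⟪v, v⟫ * b + ⟪w, w⟫ * c) * h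

theorem exists_eq_smul_add_smul_add_smul_of_mem_convexHull {b c d x : E}
    (hx : x ∈ convexHull ℝ {b, c, d}) :
    ∃ a₁ a₂ a₃ : ℝ, 0 ≤ a₁ ∧ 0 ≤ a₂ ∧ 0 ≤ a₃ ∧ a₁ + a₂ + a₃ = 1 ∧
      x = a₁ • b + a₂ • c + a₃ • d := by
  rw [← convexJoin_singleton_segment, mem_convexJoin] at hx
  obtain ⟨_, rfl, m, ⟨u, v, hu, hv, huv, rfl⟩, t, s, ht, hs, hts, rfl⟩ := hx
  refine ⟨t, s * u, s * v, ht, mul_nonneg hs hu, mul_nonneg hs hv, ?_, ?_⟩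
  · linear_combination s * huv + hts
  · rw [smul_add, smul_smul, smul_smul, add_assoc]


theorem three_mul_one_sub_dist_sq_le_sq_of_mem_convexHull {q b c d x : E} {L : ℝ}
    (hx : x ∈ convexHull ℝ {b, c, d}) (hb : 1 ≤ dist q b) (hc : 1 ≤ dist q c) (hd : 1 ≤ dist q d)
    (hbc : dist b c ≤ L) (hbd : dist b d ≤ L) (hcd : dist c d ≤ L) :
    3 * (1 - dist q x ^ 2) ≤ L ^ 2 := by
  obtain ⟨a₁, a₂, a₃, ha₁, ha₂, ha₃, hsum, rfl⟩ :=
    exists_eq_smul_add_smul_add_smul_of_mem_convexHull hx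
  have key := norm_smul_add_smul_add_smul_sq (u := b - q) (v := c - q) (w := d - q) hsum
  have hcomb : a₁ • (b - q) + a₂ • (c - q) + a₃ • (d - q) = a₁ • b + a₂ • c + a₃ • d - q := by
    conv_rhs => rw [← one_smul ℝ q, ← hsum]
    simp only [smul_sub, add_smul]
    abel
  simp only [hcomb, sub_sub_sub_cancel_right, ← dist_eq_norm, dist_comm _ q] at key
  have sq_le : ∀ {y : ℝ}, y ≤ L → 0 ≤ y → y ^ 2 ≤ L ^ 2 := fun h h0 => pow_le_pow_left₀ h0 h 2
  have hpairs : a₁ * a₂ + a₁ * a₃ + a₂ * a₃ ≤ 1 / 3 := by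
    nlinarith [sq_nonneg (a₁ - a₂), sq_nonneg (a₁ - a₃), sq_nonneg (a₂ - a₃)]
  nlinarith [mul_nonneg ha₁ ha₂, mul_nonneg ha₁ ha₃, mul_nonneg ha₂ ha₃,
    mul_le_mul_of_nonneg_left (sq_le hbc dist_nonneg) (mul_nonneg ha₁ ha₂),
    mul_le_mul_of_nonneg_left (sq_le hbd dist_nonneg) (mul_nonneg ha₁ ha₃),
    mul_le_mul_of_nonneg_left (sq_le hcd dist_nonneg) (mul_nonneg ha₂ ha₃),
    mul_le_mul_of_nonneg_left (one_le_pow₀ hb (n := 2)) ha₁,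
    mul_le_mul_of_nonneg_left (one_le_pow₀ hc (n := 2)) ha₂,
    mul_le_mul_of_nonneg_left (one_le_pow₀ hd (n := 2)) ha₃]

end InnerProductSpace

theorem six_div_sq_add_three_lt {ρ r R s : ℝ} (hr : 0 < r) (hR : 0 ≤ R) (haspect : R < ρ * r)
    (h2r : 2 * r ≤ s) (hedge : 3 * (1 - (1 - s) ^ 2) ≤ (2 * R) ^ 2) :
    6 / (ρ ^ 2 + 3) < s := by
  have hs : 0 < s := by linarith
  have hRsq : (2 * R) ^ 2 < ρ ^ 2 * s ^ 2 :=
    calc (2 * R) ^ 2 < (ρ * (2 * r)) ^ 2 :=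
          pow_lt_pow_left₀ (by linarith) (by positivity) two_ne_zero
      _ ≤ ρ ^ 2 * s ^ 2 := by rw [mul_pow]; gcongr
  rw [div_lt_iff₀ (by positivity)]
  nlinarith

theorem stmt11_general (ρ r R : ℝ) (hr : 0 < r)
    (p q p' b c d I O : EuclideanSpace ℝ (Fin 3))
    (hpq : dist p q = 1)
    (hb : 1 ≤ dist q b) (hc : 1 ≤ dist q c) (hd : 1 ≤ dist q d)
    (hin : Metric.closedBall I r ⊆ convexHull ℝ {p, b, c, d})
    (hOp : dist O p = R) (hOb : dist O b = R) (hOc : dist O c = R) (hOd : dist O d = R)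
    (haspect : R < ρ * r)
    (hp'f : p' ∈ convexHull ℝ ({b, c, d} : Set (EuclideanSpace ℝ (Fin 3))))
    (hp'seg : p' ∈ segment ℝ p q) :
    6 / (ρ ^ 2 + 3) < dist p p' := by
  have h2r : 2 * r ≤ dist p p' :=
    two_mul_le_dist_of_closedBall_subset_convexHull (by simp) hr.le hin hp'f
  have hψ : dist q p' = 1 - dist p p' := by
    rw [← hpq, ← dist_add_dist_of_mem_segment hp'seg, dist_comm q]; ring
  have hedge : ∀ {x y : EuclideanSpace ℝ (Fin 3)}, dist O x = R → dist O y = R →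
      dist x y ≤ 2 * R := fun hx hy => (dist_triangle_left _ _ O).trans_eq (by rw [hx, hy]; ring)
  have hlong := three_mul_one_sub_dist_sq_le_sq_of_mem_convexHull hp'f hb hc hd
    (hedge hOb hOc) (hedge hOb hOd) (hedge hOc hOd)
  rw [hψ] at hlong
  exact six_div_sq_add_three_lt hr (hOp ▸ dist_nonneg) haspect h2r hlong

/-- Let `p` be a nearest mesh vertex to the query point `q`, normalized so that
`|pq| = 1` (so the other vertices `b`, `c`, `d` of the first crossed tetrahedron
`τ = pbcd` lie outside the open unit ball around `q`).  If `τ` has insphere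
radius `r` and circumsphere radius `R` with `R < ρ·r`, and `p'` is the point
where the segment `pq` meets the face `bcd` opposite `p`, then
`|pp'| > 6/(ρ² + 3)`. -/
theorem stmt11 (ρ r R : ℝ) (hρ : 3 ≤ ρ) (hr : 0 < r)
    (p q p' b c d I O : EuclideanSpace ℝ (Fin 3))
    (hpq : dist p q = 1)
    (hb : 1 ≤ dist q b) (hc : 1 ≤ dist q c) (hd : 1 ≤ dist q d)
    (hin : Metric.closedBall I r ⊆ convexHull ℝ {p, b, c, d})
    (hOp : dist O p = R) (hOb : dist O b = R) (hOc : dist O c = R) (hOd : dist O d = R)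
    (haspect : R < ρ * r)
    (hp'f : p' ∈ convexHull ℝ ({b, c, d} : Set (EuclideanSpace ℝ (Fin 3))))
    (hp'seg : p' ∈ segment ℝ p q) :
    6 / (ρ ^ 2 + 3) < dist p p' :=
  stmt11_general ρ r R hr p q p' b c d I O hpq hb hc hd hin hOp hOb hOc hOd haspect hp'f hp'seg
end
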